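/- arXiv:1902.03189 — 4 statements merged into one kernel-verified Lean document; each statement's English description precedes it below -/
import Mathlib

section
/- Let λ, σ > 0 and t₀ ∈ ℝ. Define Ȳ(t) = λ^(1/σ) e^(−λt) / (e^(−λσ(t−1)) + C)^(1/σ) for a constant C > 0. Then Ȳ satisfies the delay differential inequality Ȳ'(t) ≥ −λ Ȳ(t) + Ȳ(t−1)^σ · Ȳ(t) for all t ≥ t₀ + 1. -/
/-!
Write `g t = exp (-λσ(t-1)) + C`, so that `Ȳ(t) = λ^(1/σ) e^(-λt) g(t)^(-1/σ)`. Logarithmic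
differentiation gives `Ȳ'(t) = (-λ + λ e^(-λσ(t-1)) / g(t)) Ȳ(t)`, while
`Ȳ(t-1)^σ = λ e^(-λσ(t-1)) / g(t-1)`. Since `g` is decreasing, `g(t) ≤ g(t-1)`, which is the inequality.
-/

open Real

noncomputable def ybar (lam sig C : ℝ) (t : ℝ) : ℝ :=
  lam ^ (1 / sig) * exp (-lam * t) / (exp (-lam * sig * (t - 1)) + C) ^ (1 / sig)

variable {lam sig C : ℝ}

lemma ybar_pos (hlam : 0 < lam) (hC : 0 ≤ C) (t : ℝ) : 0 < ybar lam sig C t := by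
  unfold ybar; positivity

lemma hasDerivAt_ybar (hsig : sig ≠ 0) (hC : 0 ≤ C) (t : ℝ) :
    HasDerivAt (ybar lam sig C)
      ((-lam + lam * exp (-lam * sig * (t - 1)) / (exp (-lam * sig * (t - 1)) + C))
        * ybar lam sig C t) t := by
  have hg : 0 < exp (-lam * sig * (t - 1)) + C := by positivity
  have hnum : HasDerivAt (fun s => lam ^ (1 / sig) * exp (-lam * s))
      (lam ^ (1 / sig) * (exp (-lam * t) * -lam)) t := by
    simpa using ((hasDerivAt_id t).const_mul (-lam)).exp.const_mul (lam ^ (1 / sig))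
  have hden : HasDerivAt (fun s => (exp (-lam * sig * (s - 1)) + C) ^ (1 / sig))
      (exp (-lam * sig * (t - 1)) * (-lam * sig) * (1 / sig) *
        (exp (-lam * sig * (t - 1)) + C) ^ (1 / sig - 1)) t := by
    have := (((hasDerivAt_id t).sub_const 1).const_mul (-lam * sig)).exp.add_const C
    exact (by simpa using this : HasDerivAt _ _ t).rpow_const (Or.inl hg.ne')
  refine (hnum.div hden (rpow_pos_of_pos hg _).ne').congr_deriv ?_
  rw [rpow_sub hg, rpow_one, ybar]
  field_simp
  ring

lemma ybar_rpow (hlam : 0 ≤ lam) (hsig : sig ≠ 0) (hC : 0 ≤ C) (t : ℝ) :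
    ybar lam sig C t ^ sig = lam * exp (-lam * sig * t) / (exp (-lam * sig * (t - 1)) + C) := by
  have hg : 0 < exp (-lam * sig * (t - 1)) + C := by positivity
  have rpow_inv_rpow {x : ℝ} (hx : 0 ≤ x) : (x ^ (1 / sig)) ^ sig = x := by
    rw [← rpow_mul hx, one_div_mul_cancel hsig, rpow_one]
  unfold ybar
  rw [div_rpow (by positivity) (by positivity), mul_rpow (by positivity) (exp_pos _).le,
    rpow_inv_rpow hlam, rpow_inv_rpow hg.le, ← exp_mul]
  ring_nf

theorem stmt_4 (lam sig C t₀ : ℝ) (hlam : 0 < lam) (hsig : 0 < sig) (hC : 0 < C) :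
    ∀ t : ℝ, t₀ + 1 ≤ t →
      deriv (fun s : ℝ =>
          lam ^ (1 / sig) * Real.exp (-lam * s) /
            (Real.exp (-lam * sig * (s - 1)) + C) ^ (1 / sig)) t
        ≥ -lam * (lam ^ (1 / sig) * Real.exp (-lam * t) /
              (Real.exp (-lam * sig * (t - 1)) + C) ^ (1 / sig))
          + (lam ^ (1 / sig) * Real.exp (-lam * (t - 1)) /
              (Real.exp (-lam * sig * (t - 1 - 1)) + C) ^ (1 / sig)) ^ sig
            * (lam ^ (1 / sig) * Real.exp (-lam * t) /
              (Real.exp (-lam * sig * (t - 1)) + C) ^ (1 / sig)) := by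
  intro t _
  change deriv (ybar lam sig C) t ≥
    -lam * ybar lam sig C t + ybar lam sig C (t - 1) ^ sig * ybar lam sig C t
  rw [(hasDerivAt_ybar hsig.ne' hC.le t).deriv, ybar_rpow hlam.le hsig.ne' hC.le, add_mul]
  have hg_anti : exp (-lam * sig * (t - 1)) ≤ exp (-lam * sig * (t - 1 - 1)) :=
    exp_le_exp.mpr (by nlinarith [mul_pos hlam hsig])
  have hY : 0 < ybar lam sig C t := ybar_pos hlam hC.le t
  gcongr
end

section
/- Let H be a real Hilbert space, (φₙ)_{n≥1} an orthonormal basis of H, and (λₙ)_{n≥1} a nondecreasing sequence of positive reals. Fix an integer k ≥ 1 and ε ∈ (0,1). Suppose φ ∈ H satisfies |⟨φ, φⱼ⟩| ≤ ε‖φ‖ for all j ≤ k, and suppose the quadratic form Q(φ) := Σₙ λₙ ⟨φ, φₙ⟩² is finite. Then Q(φ) ≥ (λ_{k+1} − (λ_{k+1} − λ₁)·k·ε²)·‖φ‖². -/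
/-!
Write `cₙ = ⟪φ, φₙ⟫`, so that `∑ cₙ² = ‖φ‖²` by Parseval. Monotonicity of `λ` bounds the weights
from below by `λ₀` on the first `k` modes and by `λₖ` on the rest, which gives
`Q(φ) ≥ λₖ ‖φ‖² - (λₖ - λ₀) ∑_{n<k} cₙ²`; almost-orthogonality bounds the last sum by `k ε² ‖φ‖²`.
-/

open Finset

theorem HilbertBasis.hasSum_inner_sq {ι E : Type*} [NormedAddCommGroup E] [InnerProductSpace ℝ E]
    (b : HilbertBasis ι ℝ E) (x : E) :
    HasSum (fun i => (inner ℝ x (b i) : ℝ) ^ 2) (‖x‖ ^ 2) := by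
  simpa only [sq, real_inner_comm x, real_inner_self_eq_norm_mul_norm] using
    b.hasSum_inner_mul_inner x x

theorem Monotone.mul_sub_mul_sum_range_le_tsum_mul {lam a : ℕ → ℝ} {s : ℝ} (hmono : Monotone lam)
    (ha : ∀ n, 0 ≤ a n) (has : HasSum a s) (hla : Summable fun n => lam n * a n) (k : ℕ) :
    lam k * s - (lam k - lam 0) * ∑ n ∈ range k, a n ≤ ∑' n, lam n * a n := by
  have head : lam 0 * ∑ n ∈ range k, a n ≤ ∑ n ∈ range k, lam n * a n := by
    rw [mul_sum]
    exact sum_le_sum fun n _ => mul_le_mul_of_nonneg_right (hmono n.zero_le) (ha n)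
  have tail : lam k * ∑' n, a (n + k) ≤ ∑' n, lam (n + k) * a (n + k) := by
    rw [← tsum_mul_left]
    refine Summable.tsum_le_tsum (fun n => ?_) ?_ ((summable_nat_add_iff k).mpr hla)
    · exact mul_le_mul_of_nonneg_right (hmono (Nat.le_add_left k n)) (ha _)
    · exact ((summable_nat_add_iff k).mpr has.summable).mul_left _
  rw [← has.tsum_eq, ← has.summable.sum_add_tsum_nat_add k, ← hla.sum_add_tsum_nat_add k]
  linarith

theorem sum_range_sq_le_of_abs_le {c : ℕ → ℝ} {M : ℝ} {k : ℕ} (hc : ∀ j < k, |c j| ≤ M) :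
    ∑ n ∈ range k, c n ^ 2 ≤ k * M ^ 2 := by
  simpa using sum_le_card_nsmul (range k) (fun n => c n ^ 2) (M ^ 2) fun n hn => by
    simpa only [sq_abs] using pow_le_pow_left₀ (abs_nonneg _) (hc n (mem_range.mp hn)) 2

theorem stmt_6_general {H : Type*} [NormedAddCommGroup H] [InnerProductSpace ℝ H]
    (b : HilbertBasis ℕ ℝ H) (lam : ℕ → ℝ) (hmono : Monotone lam)
    (k : ℕ) (ε : ℝ) (φ : H)
    (hAO : ∀ j < k, |(inner ℝ φ (b j) : ℝ)| ≤ ε * ‖φ‖)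
    (hQ : Summable (fun n => lam n * (inner ℝ φ (b n) : ℝ) ^ 2)) :
    (∑' n, lam n * (inner ℝ φ (b n) : ℝ) ^ 2)
      ≥ (lam k - (lam k - lam 0) * k * ε ^ 2) * ‖φ‖ ^ 2 := by
  have split := hmono.mul_sub_mul_sum_range_le_tsum_mul (fun n => sq_nonneg _)
    (b.hasSum_inner_sq φ) hQ k
  have low_modes := sum_range_sq_le_of_abs_le hAO
  have gap : 0 ≤ lam k - lam 0 := sub_nonneg.mpr (hmono k.zero_le)
  linarith [mul_le_mul_of_nonneg_left low_modes gap]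

theorem stmt_6 {H : Type*} [NormedAddCommGroup H] [InnerProductSpace ℝ H] [CompleteSpace H]
    (b : HilbertBasis ℕ ℝ H) (lam : ℕ → ℝ) (hmono : Monotone lam) (hpos : ∀ n, 0 < lam n)
    (k : ℕ) (hk : 1 ≤ k) (ε : ℝ) (hε0 : 0 < ε) (hε1 : ε < 1) (φ : H)
    (hAO : ∀ j < k, |(inner ℝ φ (b j) : ℝ)| ≤ ε * ‖φ‖)
    (hQ : Summable (fun n => lam n * (inner ℝ φ (b n) : ℝ) ^ 2)) :
    (∑' n, lam n * (inner ℝ φ (b n) : ℝ) ^ 2)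
      ≥ (lam k - (lam k - lam 0) * k * ε ^ 2) * ‖φ‖ ^ 2 :=
  stmt_6_general b lam hmono k ε φ hAO hQ
end

section
/- Let p > 1, V > 0, and |f| ≤ δV with 0 < δ < 1/(2p). Then there exists a constant κ_p > 0 depending only on p such that |(V+f)^(p+1) − V^(p+1) − ((p+1)/p)·((V+f)^p − V^p)·V − a·f²| ≤ κ_p·δ·V^(p−1)·f² whenever a = ((p+1)/2)·V^(p−1). In particular, ((p+1)/2)·(1+c_p δ)^(−2)·V^(p−1) f² ≤ (V+f)^(p+1) − V^(p+1) − ((p+1)/p)·((V+f)^p − V^p)·V ≤ ((p+1)/2)·(1+c_p δ)²·V^(p−1) f² for some constant c_p depending only on p. -/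
open Set

/-!
Write `F(f) = (V+f)^(p+1) − V^(p+1) − ((p+1)/p)((V+f)^p − V^p)V`. Then `F(0) = 0` and
`F'(x) = (p+1)(V+x)^(p−1) x`, so `F(f) = ∫₀^f (p+1)(V+x)^(p−1) x dx`, while the quadratic
`((p+1)/2) C f²` is the same integral with `(V+x)^(p−1)` frozen to `C`. Hence a pointwise bound on
`(V+x)^(p−1)` between `0` and `f` transfers to `F(f)`. For `|x| ≤ δV`, Bernoulli's inequality and
`1 + t ≤ e^t ≤ 1/(1 − t)` pin `(V+x)^(p−1)` between `(1 − pδ)V^(p−1)` and `(1 + 2pδ)V^(p−1)`.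
-/

lemma nonneg_of_hasDerivAt_of_mul_nonneg {g g' : ℝ → ℝ} {a : ℝ} (h0 : g 0 = 0)
    (hd : ∀ x ∈ uIcc 0 a, HasDerivAt g (g' x) x) (hsign : ∀ x ∈ uIcc 0 a, 0 ≤ x * g' x) :
    0 ≤ g a := by
  have hcont : ContinuousOn g (uIcc 0 a) := fun x hx => (hd x hx).continuousAt.continuousWithinAt
  rcases le_total 0 a with ha | ha
  · rw [uIcc_of_le ha] at hd hsign hcont
    have hmono : MonotoneOn g (Icc 0 a) := by
      refine monotoneOn_of_deriv_nonneg (convex_Icc 0 a) hcont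
        (fun x hx => (hd x (interior_subset hx)).differentiableAt.differentiableWithinAt)
        fun x hx => ?_
      rw [interior_Icc] at hx
      rw [(hd x (Ioo_subset_Icc_self hx)).deriv]
      exact nonneg_of_mul_nonneg_right (hsign x (Ioo_subset_Icc_self hx)) hx.1
    simpa [h0] using hmono (left_mem_Icc.2 ha) (right_mem_Icc.2 ha) ha
  · rw [uIcc_of_ge ha] at hd hsign hcont
    have hanti : AntitoneOn g (Icc a 0) := by
      refine antitoneOn_of_deriv_nonpos (convex_Icc a 0) hcont
        (fun x hx => (hd x (interior_subset hx)).differentiableAt.differentiableWithinAt)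
        fun x hx => ?_
      rw [interior_Icc] at hx
      rw [(hd x (Ioo_subset_Icc_self hx)).deriv]
      have := hsign x (Ioo_subset_Icc_self hx)
      nlinarith [hx.2]
    simpa [h0] using hanti (left_mem_Icc.2 ha) (right_mem_Icc.2 ha) ha

lemma one_sub_mul_le_one_sub_rpow_sub_one {p δ : ℝ} (hp : 1 ≤ p) (hδ : 0 ≤ δ) (hδ1 : δ < 1) :
    1 - p * δ ≤ (1 - δ) ^ (p - 1) :=
  calc 1 - p * δ ≤ (1 - δ) ^ p := by
        simpa [sub_eq_add_neg] using one_add_mul_self_le_rpow_one_add (s := -δ) (by linarith) hp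
    _ ≤ (1 - δ) ^ (p - 1) := Real.rpow_le_rpow_of_exponent_ge (by linarith) (by linarith) (by linarith)

lemma one_add_rpow_le_one_add_two_mul {q δ : ℝ} (hq : 0 ≤ q) (hδ : 0 ≤ δ) (hqδ : q * δ ≤ 1 / 2) :
    (1 + δ) ^ q ≤ 1 + 2 * q * δ := by
  have hqδ0 : 0 ≤ q * δ := mul_nonneg hq hδ
  calc (1 + δ) ^ q ≤ Real.exp δ ^ q :=
        Real.rpow_le_rpow (by linarith) (by linarith [Real.add_one_le_exp δ]) hq
    _ = Real.exp (q * δ) := by rw [← Real.exp_mul, mul_comm]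
    _ ≤ 1 / (1 - q * δ) := Real.exp_bound_div_one_sub_of_interval hqδ0 (by linarith)
    _ ≤ 1 + 2 * q * δ := by
        rw [div_le_iff₀ (by linarith)]
        nlinarith

lemma rpow_add_sub_one_mem_Icc {p V δ x : ℝ} (hp : 1 ≤ p) (hV : 0 < V) (hδ : 0 ≤ δ)
    (hpδ : p * δ ≤ 1 / 2) (hx : |x| ≤ δ * V) :
    (V + x) ^ (p - 1) ∈ Icc ((1 - p * δ) * V ^ (p - 1)) ((1 + 2 * p * δ) * V ^ (p - 1)) := by
  have hδ1 : δ ≤ 1 / 2 := by nlinarith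
  have hVp : 0 ≤ V ^ (p - 1) := Real.rpow_nonneg hV.le _
  rw [abs_le] at hx
  constructor
  · calc (1 - p * δ) * V ^ (p - 1) ≤ (1 - δ) ^ (p - 1) * V ^ (p - 1) :=
          mul_le_mul_of_nonneg_right (one_sub_mul_le_one_sub_rpow_sub_one hp hδ (by linarith)) hVp
      _ = ((1 - δ) * V) ^ (p - 1) := (Real.mul_rpow (by linarith) hV.le).symm
      _ ≤ (V + x) ^ (p - 1) := Real.rpow_le_rpow (by nlinarith) (by linarith) (by linarith)
  · calc (V + x) ^ (p - 1) ≤ ((1 + δ) * V) ^ (p - 1) :=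
          Real.rpow_le_rpow (by nlinarith) (by linarith) (by linarith)
      _ = (1 + δ) ^ (p - 1) * V ^ (p - 1) := Real.mul_rpow (by linarith) hV.le
      _ ≤ (1 + 2 * (p - 1) * δ) * V ^ (p - 1) :=
          mul_le_mul_of_nonneg_right
            (one_add_rpow_le_one_add_two_mul (by linarith) hδ (by nlinarith)) hVp
      _ ≤ (1 + 2 * p * δ) * V ^ (p - 1) := by gcongr; linarith

noncomputable def entropyIntegrand (p V f : ℝ) : ℝ :=
  (V + f) ^ (p + 1) - V ^ (p + 1) - ((p + 1) / p) * ((V + f) ^ p - V ^ p) * V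

lemma hasDerivAt_entropyIntegrand {p V x : ℝ} (hp : p ≠ 0) (hVx : 0 < V + x) :
    HasDerivAt (entropyIntegrand p V) ((p + 1) * (V + x) ^ (p - 1) * x) x := by
  have hlin : HasDerivAt (fun y : ℝ => V + y) 1 x := (hasDerivAt_id x).const_add V
  have hpow (r : ℝ) : HasDerivAt (fun y => (V + y) ^ r) (r * (V + x) ^ (r - 1)) x := by
    have := (Real.hasDerivAt_rpow_const (p := r) (Or.inl hVx.ne')).comp x hlin
    rwa [mul_one] at this
  have hsplit : (V + x) ^ p = (V + x) ^ (p - 1) * (V + x) := by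
    rw [← Real.rpow_add_one hVx.ne', sub_add_cancel]
  have h := ((hpow (p + 1)).sub_const (V ^ (p + 1))).sub
    ((((hpow p).sub_const (V ^ p)).const_mul ((p + 1) / p)).mul_const V)
  rw [add_sub_cancel_right, hsplit] at h
  refine h.congr_deriv ?_
  field_simp
  ring

section Comparison

variable {p V f C : ℝ}

lemma hasDerivAt_entropyIntegrand_sub_quadratic {x : ℝ} (hp : p ≠ 0) (hVx : 0 < V + x) :
    HasDerivAt (fun y => entropyIntegrand p V y - (p + 1) / 2 * C * y ^ 2)
      ((p + 1) * x * ((V + x) ^ (p - 1) - C)) x := by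
  refine ((hasDerivAt_entropyIntegrand hp hVx).sub
    ((hasDerivAt_pow 2 x).const_mul ((p + 1) / 2 * C))).congr_deriv ?_
  push_cast
  ring

lemma add_pos_of_mem_uIcc_zero {x : ℝ} (hV : 0 < V) (hVf : 0 < V + f) (hx : x ∈ uIcc 0 f) :
    0 < V + x := by
  have := hx.1
  rcases min_choice 0 f with h | h <;> rw [h] at this <;> linarith

lemma quadratic_le_entropyIntegrand (hp : p ≠ 0) (hp1 : 0 < p + 1) (hV : 0 < V)
    (hVf : 0 < V + f) (hC : ∀ x ∈ uIcc 0 f, C ≤ (V + x) ^ (p - 1)) :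
    (p + 1) / 2 * C * f ^ 2 ≤ entropyIntegrand p V f := by
  have key := nonneg_of_hasDerivAt_of_mul_nonneg (by simp [entropyIntegrand])
    (fun x hx => hasDerivAt_entropyIntegrand_sub_quadratic (C := C) hp
      (add_pos_of_mem_uIcc_zero hV hVf hx))
    fun x hx => by
      rw [show x * ((p + 1) * x * ((V + x) ^ (p - 1) - C))
          = (p + 1) * x ^ 2 * ((V + x) ^ (p - 1) - C) by ring]
      exact mul_nonneg (mul_nonneg hp1.le (sq_nonneg x)) (sub_nonneg.2 (hC x hx))
  linarith

lemma entropyIntegrand_le_quadratic (hp : p ≠ 0) (hp1 : 0 < p + 1) (hV : 0 < V)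
    (hVf : 0 < V + f) (hC : ∀ x ∈ uIcc 0 f, (V + x) ^ (p - 1) ≤ C) :
    entropyIntegrand p V f ≤ (p + 1) / 2 * C * f ^ 2 := by
  have key := nonneg_of_hasDerivAt_of_mul_nonneg (by simp [entropyIntegrand])
    (fun x hx => (hasDerivAt_entropyIntegrand_sub_quadratic (C := C) hp
      (add_pos_of_mem_uIcc_zero hV hVf hx)).neg)
    fun x hx => by
      rw [show x * -((p + 1) * x * ((V + x) ^ (p - 1) - C))
          = (p + 1) * x ^ 2 * (C - (V + x) ^ (p - 1)) by ring]
      exact mul_nonneg (mul_nonneg hp1.le (sq_nonneg x)) (sub_nonneg.2 (hC x hx))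
  rw [Pi.neg_apply] at key
  linarith

end Comparison

lemma entropyIntegrand_mem_Icc {p V f δ : ℝ} (hp : 1 ≤ p) (hV : 0 < V) (hδ : 0 ≤ δ)
    (hpδ : p * δ ≤ 1 / 2) (hf : |f| ≤ δ * V) :
    entropyIntegrand p V f ∈ Icc ((1 - p * δ) * ((p + 1) / 2 * V ^ (p - 1) * f ^ 2))
      ((1 + 2 * p * δ) * ((p + 1) / 2 * V ^ (p - 1) * f ^ 2)) := by
  have hVf : 0 < V + f := by
    have : δ ≤ 1 / 2 := by nlinarith
    nlinarith [neg_abs_le f]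
  have hbound (x) (hx : x ∈ uIcc 0 f) := rpow_add_sub_one_mem_Icc hp hV hδ hpδ
    ((by simpa using abs_sub_left_of_mem_uIcc hx : |x| ≤ |f|).trans hf)
  have hp0 : p ≠ 0 := by positivity
  constructor
  · have := quadratic_le_entropyIntegrand hp0 (by linarith) hV hVf fun x hx => (hbound x hx).1
    linarith
  · have := entropyIntegrand_le_quadratic hp0 (by linarith) hV hVf fun x hx => (hbound x hx).2
    linarith

lemma one_add_rpow_neg_two_le {t : ℝ} (ht : 0 ≤ t) (ht2 : t ≤ 1 / 2) :
    (1 + t) ^ (-(2 : ℝ)) ≤ 1 - t := by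
  rw [Real.rpow_neg (by linarith), Real.rpow_two, inv_le_iff_one_le_mul₀ (by positivity)]
  nlinarith [mul_nonneg ht ht, mul_nonneg (mul_nonneg ht ht) ht]

theorem stmt_9 (p : ℝ) (hp : 1 < p) :
    ∃ κ : ℝ, 0 < κ ∧ ∃ c : ℝ, 0 < c ∧
      ∀ V f δ : ℝ, 0 < V → 0 < δ → δ < 1 / (2 * p) → |f| ≤ δ * V →
        |((V + f) ^ (p + 1) - V ^ (p + 1) - ((p + 1) / p) * ((V + f) ^ p - V ^ p) * V)
            - ((p + 1) / 2) * V ^ (p - 1) * f ^ 2|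
          ≤ κ * δ * V ^ (p - 1) * f ^ 2 ∧
        ((p + 1) / 2) * (1 + c * δ) ^ (-(2 : ℝ)) * V ^ (p - 1) * f ^ 2
          ≤ (V + f) ^ (p + 1) - V ^ (p + 1) - ((p + 1) / p) * ((V + f) ^ p - V ^ p) * V ∧
        (V + f) ^ (p + 1) - V ^ (p + 1) - ((p + 1) / p) * ((V + f) ^ p - V ^ p) * V
          ≤ ((p + 1) / 2) * (1 + c * δ) ^ (2 : ℝ) * V ^ (p - 1) * f ^ 2 := by
  refine ⟨p * (p + 1), by positivity, p, by positivity, fun V f δ hV hδ hδp hf => ?_⟩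
  have hpδ : p * δ ≤ 1 / 2 := by
    rw [lt_div_iff₀ (by positivity)] at hδp
    linarith
  obtain ⟨hlow, hup⟩ := entropyIntegrand_mem_Icc hp.le hV hδ.le hpδ hf
  simp only [entropyIntegrand] at hlow hup
  have hQ : 0 ≤ (p + 1) / 2 * V ^ (p - 1) * f ^ 2 := by positivity
  have hinv := mul_le_mul_of_nonneg_right (one_add_rpow_neg_two_le (by positivity) hpδ) hQ
  have hsq : 1 + 2 * (p * δ) ≤ (1 + p * δ) ^ (2 : ℝ) := by
    rw [Real.rpow_two]
    nlinarith [sq_nonneg (p * δ)]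
  have hsq' := mul_le_mul_of_nonneg_right hsq hQ
  exact ⟨abs_le.2 ⟨by linarith, by linarith⟩, by linarith, by linarith⟩
end

section
/- Let p > 1, V > 0, and v = V + f with |f| ≤ δV for some 0 < δ < 1/(2p). Define a = ((v^(p−1) − V^(p−1))/(v^p − V^p))·v for v ≠ V. Then there exists a constant c_p > 0 depending only on p such that (p−1)/p − c_p·δ ≤ a ≤ (p−1)/p + c_p·δ. -/
/-!
With x = v / V the quotient is (x ^ p - x) / (x ^ p - 1). The mean value theorem gives
x ^ p - 1 = p ξ ^ (p - 1) (x - 1) for some ξ between 1 and x, which turns the quotient minus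
(p - 1) / p into (1 - ξ ^ (1 - p)) / p. Since |x - 1| ≤ δ < 1/2, ξ ≥ 1/2, and the mean value
theorem once more, now for t ↦ t ^ (1 - p) on [1/2, ∞), bounds this by (p - 1) 2 ^ p / p · δ.
-/

open Real Set

theorem exists_rpow_sub_rpow_eq_mul {a b : ℝ} (q : ℝ) (ha : 0 < a) (hb : 0 < b) :
    ∃ ξ ∈ uIcc a b, b ^ q - a ^ q = q * ξ ^ (q - 1) * (b - a) := by
  wlog hab : a ≤ b generalizing a b
  · obtain ⟨ξ, hξ, h⟩ := this hb ha (le_of_not_ge hab)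
    exact ⟨ξ, uIcc_comm a b ▸ hξ, by linarith⟩
  rcases hab.eq_or_lt with rfl | hab
  · exact ⟨a, left_mem_uIcc, by ring⟩
  have hderiv : ∀ x ∈ Ioo a b, HasDerivAt (· ^ q) (q * x ^ (q - 1)) x := fun x hx ↦
    hasDerivAt_rpow_const (Or.inl (ha.trans hx.1).ne')
  have hcont : ContinuousOn (· ^ q) (Icc a b) := fun x hx ↦
    (continuousAt_rpow_const x q (Or.inl (ha.trans_le hx.1).ne')).continuousWithinAt
  obtain ⟨ξ, hξ, h⟩ := exists_hasDerivAt_eq_slope _ _ hab hcont hderiv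
  refine ⟨ξ, Icc_subset_uIcc (Ioo_subset_Icc_self hξ), ?_⟩
  rw [h, div_mul_cancel₀ _ (sub_pos.2 hab).ne']

theorem abs_rpow_sub_one_le {r t m : ℝ} (hm : 0 < m) (hmt : m ≤ t) (hm1 : m ≤ 1) (hr : r ≤ 1) :
    |t ^ r - 1| ≤ |r| * m ^ (r - 1) * |t - 1| := by
  obtain ⟨η, hη, h⟩ := exists_rpow_sub_rpow_eq_mul r one_pos (hm.trans_le hmt)
  have hmη : m ≤ η := (le_inf hm1 hmt).trans hη.1
  have hη_pow : η ^ (r - 1) ≤ m ^ (r - 1) := rpow_le_rpow_of_nonpos hm hmη (by linarith)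
  rw [one_rpow] at h
  rw [h, abs_mul, abs_mul, abs_of_pos (rpow_pos_of_pos (hm.trans_le hmη) _)]
  gcongr

theorem exists_rpow_sub_self_div_rpow_sub_one_eq {p x : ℝ} (hp : p ≠ 0) (hx : 0 < x)
    (hx1 : x ≠ 1) :
    ∃ ξ ∈ uIcc 1 x, (x ^ p - x) / (x ^ p - 1) - (p - 1) / p = (1 - ξ ^ (1 - p)) / p := by
  obtain ⟨ξ, hξ, h⟩ := exists_rpow_sub_rpow_eq_mul p one_pos hx
  rw [one_rpow] at h
  have hξ0 : 0 < ξ := lt_of_lt_of_le (lt_inf_iff.2 ⟨one_pos, hx⟩) hξ.1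
  refine ⟨ξ, hξ, ?_⟩
  have hx1' : x - 1 ≠ 0 := sub_ne_zero.2 hx1
  have hξp : ξ ^ (1 - p) * ξ ^ (p - 1) = 1 := by
    rw [← rpow_add hξ0]; simp
  rw [show x ^ p - x = (x ^ p - 1) - (x - 1) by ring, h]
  field_simp
  linear_combination hξp

theorem abs_rpow_sub_self_div_rpow_sub_one_sub_le {p x : ℝ} (hp : 1 < p) (hx : |x - 1| ≤ 1 / 2)
    (hx1 : x ≠ 1) :
    |(x ^ p - x) / (x ^ p - 1) - (p - 1) / p| ≤ (p - 1) * 2 ^ p / p * |x - 1| := by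
  have hx' := abs_le.1 hx
  obtain ⟨ξ, hξ, h⟩ := exists_rpow_sub_self_div_rpow_sub_one_eq (by positivity) (by linarith) hx1
  have hξ_ge : 1 / 2 ≤ ξ := (le_inf (by norm_num) (by linarith)).trans hξ.1
  have hξ_close : |ξ - 1| ≤ |x - 1| := abs_sub_left_of_mem_uIcc hξ
  have hlip := abs_rpow_sub_one_le (r := 1 - p) (by norm_num) hξ_ge (by norm_num) (by linarith)
  rw [abs_of_nonpos (by linarith : 1 - p ≤ 0), neg_sub, sub_sub_cancel_left,
    one_div, inv_rpow zero_le_two, rpow_neg zero_le_two, inv_inv] at hlip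
  rw [h, abs_div, abs_sub_comm, abs_of_pos (by linarith : 0 < p)]
  calc |ξ ^ (1 - p) - 1| / p ≤ (p - 1) * 2 ^ p * |ξ - 1| / p := by gcongr
    _ ≤ (p - 1) * 2 ^ p / p * |x - 1| := by
      rw [mul_div_right_comm]; gcongr

theorem rpow_sub_rpow_div_rpow_sub_rpow_mul_eq {p v V : ℝ} (hv : 0 < v) (hV : 0 < V) :
    (v ^ (p - 1) - V ^ (p - 1)) / (v ^ p - V ^ p) * v
      = ((v / V) ^ p - v / V) / ((v / V) ^ p - 1) := by
  rw [div_rpow hv.le hV.le, rpow_sub_one hv.ne', rpow_sub_one hV.ne']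
  field_simp

theorem stmt_10 (p : ℝ) (hp : 1 < p) :
    ∃ c : ℝ, 0 < c ∧
      ∀ V f δ : ℝ, 0 < V → 0 < δ → δ < 1 / (2 * p) → |f| ≤ δ * V → V + f ≠ V →
        (p - 1) / p - c * δ
            ≤ ((V + f) ^ (p - 1) - V ^ (p - 1)) / ((V + f) ^ p - V ^ p) * (V + f) ∧
          ((V + f) ^ (p - 1) - V ^ (p - 1)) / ((V + f) ^ p - V ^ p) * (V + f)
            ≤ (p - 1) / p + c * δ := by
  refine ⟨(p - 1) * 2 ^ p / p, by have := sub_pos.2 hp; positivity, ?_⟩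
  intro V f δ hV _ hδp hf hne
  have hδ_half : δ < 1 / 2 := hδp.trans_le (by gcongr; linarith)
  have hx : |(V + f) / V - 1| ≤ δ := by
    rw [div_sub_one hV.ne', add_sub_cancel_left, abs_div, abs_of_pos hV, div_le_iff₀ hV]
    exact hf
  have hx1 : (V + f) / V ≠ 1 := by rwa [Ne, div_eq_one_iff_eq hV.ne']
  have hv : 0 < V + f := by linarith [neg_abs_le f, mul_le_mul_of_nonneg_right hδ_half.le hV.le]
  have hclose : |(((V + f) / V) ^ p - (V + f) / V) / (((V + f) / V) ^ p - 1) - (p - 1) / p|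
      ≤ (p - 1) * 2 ^ p / p * δ := calc
    _ ≤ (p - 1) * 2 ^ p / p * |(V + f) / V - 1| :=
        abs_rpow_sub_self_div_rpow_sub_one_sub_le hp (by linarith) hx1
    _ ≤ (p - 1) * 2 ^ p / p * δ := by have := sub_pos.2 hp; gcongr
  rw [rpow_sub_rpow_div_rpow_sub_rpow_mul_eq hv hV]
  exact ⟨by linarith [(abs_sub_le_iff.1 hclose).2], by linarith [(abs_sub_le_iff.1 hclose).1]⟩
end
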